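/- For the Max Swap Game on trees, the lexicographically sorted (descending) vector of vertex eccentricities is a generalized ordinal potential: if a vertex v performs a swap in tree T producing tree T' with ecc_{T'}(v) < ecc_T(v), then the sorted eccentricity vector of T' is strictly lexicographically smaller than that of T. -/

import Mathlib

/-!
Removing the swapped edge `vu` from `T` leaves a forest with two components, the side `S` of `v`
and the rest; `T'` is this forest plus one edge at `v`. Distances within a component are the
same in `T` and `T'`, and a shortest path between the components passes through `v`.
Let `z ∈ S` be farthest from `v` and `A = d(z, v) + ecc_T v`. Since `ecc_T' v < ecc_T v`, every
vertex with `ecc_T' ≥ A` has `ecc_T' ≤ ecc_T`, while `ecc_T z ≥ A > ecc_T' z`. So for each `t ≥ A`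
at most as many vertices have eccentricity `≥ t` after the swap as before, and strictly fewer
for `t = A`, which is the lexicographic decrease of the sorted vectors.
-/

namespace NCG
open SimpleGraph

variable {V : Type*}

/-- Eccentricity of a vertex: maximum graph distance to any other vertex. -/
noncomputable def ecc [Fintype V] (G : SimpleGraph V) (x : V) : ℕ :=
  Finset.univ.sup fun y => G.dist x y

/-- Diameter: maximum eccentricity. -/
noncomputable def diam [Fintype V] (G : SimpleGraph V) : ℕ :=
  Finset.univ.sup fun x => ecc G x

/-- Radius: minimum eccentricity. -/
noncomputable def rad [Fintype V] (G : SimpleGraph V) : ℕ :=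
  sInf (Set.range (ecc G))

/-- The eccentricities of all vertices, sorted in non-increasing order. -/
noncomputable def sortedEcc [Fintype V] (G : SimpleGraph V) : List ℕ :=
  ((Finset.univ.val.map (ecc G)).sort (· ≤ ·)).reverse

end NCG

namespace List

variable {β : Type*} [LinearOrder β]

theorem le_getElem_iff_lt_countP {l : List β} (hl : l.Pairwise (· ≥ ·)) (t : β) {j : ℕ}
    (hj : j < l.length) : t ≤ l[j] ↔ j < l.countP (t ≤ ·) := by
  induction l generalizing j with
  | nil => simp at hj
  | cons a l ih =>
    rw [pairwise_cons] at hl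
    by_cases hta : t ≤ a
    · rw [countP_cons_of_pos (by simpa using hta)]
      cases j with
      | zero => simpa using hta
      | succ j => simpa using ih hl.2 (Nat.lt_of_succ_lt_succ hj)
    · have hlt : ∀ b ∈ a :: l, b < t := by
        intro b hb
        rcases mem_cons.1 hb with rfl | hb
        exacts [lt_of_not_ge hta, (hl.1 b hb).trans_lt (lt_of_not_ge hta)]
      rw [countP_eq_zero.2 (by simpa using hlt)]
      simpa using hlt _ (getElem_mem hj)

theorem lex_lt_of_getElem {l l' : List β} (i : ℕ) (hi : i < l.length) (hi' : i < l'.length)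
    (hle : ∀ j (hj : j < i), l'[j]'(hj.trans hi') ≤ l[j]'(hj.trans hi))
    (hlt : l'[i] < l[i]) : Lex (· < ·) l' l := by
  induction i generalizing l l' with
  | zero =>
    match l, l' with
    | _ :: _, _ :: _ => exact Lex.rel hlt
  | succ i ih =>
    match l, l' with
    | a :: t, a' :: t' =>
      obtain h | rfl := (hle 0 i.succ_pos).lt_or_eq
      · exact Lex.rel h
      · exact Lex.cons (ih (Nat.lt_of_succ_lt_succ hi) (Nat.lt_of_succ_lt_succ hi')
          (fun j hj => hle (j + 1) (Nat.succ_lt_succ hj)) hlt)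

theorem lex_lt_of_countP_le {l l' : List β} (hl : l.Pairwise (· ≥ ·)) (hl' : l'.Pairwise (· ≥ ·))
    (hlen : l.length ≤ l'.length) (A : β)
    (hle : ∀ t, A ≤ t → l'.countP (t ≤ ·) ≤ l.countP (t ≤ ·))
    (hlt : l'.countP (A ≤ ·) < l.countP (A ≤ ·)) : Lex (· < ·) l' l := by
  have hi : l'.countP (A ≤ ·) < l.length := hlt.trans_le countP_le_length
  refine lex_lt_of_getElem _ hi (hi.trans_le hlen) (fun j hj => ?_) ?_
  · have hA : A ≤ l'[j] := (le_getElem_iff_lt_countP hl' A _).2 hj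
    have hj' := (le_getElem_iff_lt_countP hl' _ (hj.trans (hi.trans_le hlen))).1 le_rfl
    exact (le_getElem_iff_lt_countP hl _ _).2 (hj'.trans_le (hle _ hA))
  · calc l'[_] < A := lt_of_not_ge fun h => ((le_getElem_iff_lt_countP hl' A _).1 h).false
      _ ≤ l[_] := (le_getElem_iff_lt_countP hl A _).2 hlt

end List

namespace Finset

variable {α β : Type*} [LinearOrder β]

theorem countP_reverse_sort_map (s : Finset α) (f : α → β) (p : β → Prop) [DecidablePred p] :
    ((s.val.map f).sort (· ≤ ·)).reverse.countP (p ·) = (s.filter (p ∘ f)).card := by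
  rw [List.countP_reverse, ← Multiset.coe_countP, Multiset.sort_eq, Multiset.countP_map]
  rfl

theorem lex_reverse_sort_map {s : Finset α} (f g : α → β) (A : β)
    (hle : ∀ x ∈ s, A ≤ g x → g x ≤ f x) {z : α} (hz : z ∈ s) (hfz : A ≤ f z) (hgz : g z < A) :
    List.Lex (· < ·) ((s.val.map g).sort (· ≤ ·)).reverse ((s.val.map f).sort (· ≤ ·)).reverse := by
  refine List.lex_lt_of_countP_le (List.pairwise_reverse.2 (Multiset.pairwise_sort _ _))
    (List.pairwise_reverse.2 (Multiset.pairwise_sort _ _)) (by simp) A (fun t ht => ?_) ?_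
  · simp only [countP_reverse_sort_map]
    refine card_le_card fun x hx => ?_
    simp only [mem_filter, Function.comp_apply] at hx ⊢
    exact ⟨hx.1, hx.2.trans (hle x hx.1 (ht.trans hx.2))⟩
  · simp only [countP_reverse_sort_map]
    refine card_lt_card ⟨fun x hx => ?_, fun h => ?_⟩
    · simp only [mem_filter, Function.comp_apply] at hx ⊢
      exact ⟨hx.1, hx.2.trans (hle x hx.1 hx.2)⟩
    · have hgz' := h (mem_filter.2 ⟨hz, hfz⟩)
      simp only [mem_filter, Function.comp_apply] at hgz'
      exact hgz.not_ge hgz'.2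

end Finset

namespace SimpleGraph

variable {V : Type*} {G H : SimpleGraph V}

theorem IsAcyclic.dist_eq_of_le (hG : G.IsAcyclic) (hHG : H ≤ G) {a b : V}
    (h : H.Reachable a b) : G.dist a b = H.dist a b := by
  obtain ⟨p, hp, hpl⟩ := h.exists_path_of_dist
  obtain ⟨q, hq, hql⟩ := (h.mono hHG).exists_path_of_dist
  have hpq : (⟨p.mapLe hHG, hp.mapLe hHG⟩ : G.Path a b) = ⟨q, hq⟩ :=
    (hG.subsingleton_path a b).elim _ _
  rw [← hql, ← hpl, ← Walk.length_mapLe hHG p]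
  exact congrArg (fun r : G.Path a b => r.1.length) hpq.symm

theorem dist_eq_add_dist_of_not_reachable_deleteEdges {v w x y : V} (hxy : G.Reachable x y)
    (h : ¬ (G.deleteEdges {s(v, w)}).Reachable x y) : G.dist x y = G.dist x v + G.dist v y := by
  classical
  obtain ⟨p, hp⟩ := hxy.exists_walk_length_eq_dist
  have hv : v ∈ p.support :=
    p.fst_mem_support_of_mem_edges (p.mem_edges_of_not_reachable_deleteEdges h)
  refine le_antisymm ((p.takeUntil v hv).reachable.dist_triangle_left y) ?_
  rw [← hp, ← p.take_spec hv, Walk.length_append]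
  exact add_le_add (dist_le _) (dist_le _)

theorem Preconnected.reachable_deleteEdges_of_not_reachable (hG : G.Preconnected) {v u x y : V}
    (hx : ¬ (G.deleteEdges {s(v, u)}).Reachable x v)
    (hy : ¬ (G.deleteEdges {s(v, u)}).Reachable y v) :
    (G.deleteEdges {s(v, u)}).Reachable x y := by
  have hside : ∀ x, (G.deleteEdges {s(v, u)}).Reachable v x ∨
      (G.deleteEdges {s(v, u)}).Reachable u x := fun x => by
    induction (reachable_iff_reflTransGen v x).1 (hG v x) with
    | refl => exact Or.inl .rfl
    | @tail b c _ hbc ih =>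
      by_cases he : s(b, c) = s(v, u)
      · rcases Sym2.eq_iff.1 he with ⟨-, rfl⟩ | ⟨-, rfl⟩
        exacts [Or.inr .rfl, Or.inl .rfl]
      · have hF : (G.deleteEdges {s(v, u)}).Adj b c := deleteEdges_adj.2 ⟨hbc, by simpa using he⟩
        exact ih.imp (·.trans hF.reachable) (·.trans hF.reachable)
  have hux := (hside x).resolve_left (hx ∘ Reachable.symm)
  exact hux.symm.trans ((hside y).resolve_left (hy ∘ Reachable.symm))

end SimpleGraph

namespace NCG
open SimpleGraph

variable {V : Type*}

theorem dist_le_ecc [Fintype V] (G : SimpleGraph V) (x y : V) : G.dist x y ≤ ecc G x :=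
  Finset.le_sup (Finset.mem_univ y)

theorem exists_dist_eq_ecc [Fintype V] (G : SimpleGraph V) (x : V) : ∃ y, G.dist x y = ecc G x := by
  obtain ⟨y, -, hy⟩ := Finset.univ.exists_mem_eq_sup ⟨x, Finset.mem_univ x⟩ (G.dist x)
  exact ⟨y, hy.symm⟩

/-- `T'` arises from the tree `T` by `v` replacing its edge to `u` with an edge to `w`. -/
structure IsEdgeSwap (T T' : SimpleGraph V) (v u w : V) : Prop where
  isTree_left : T.IsTree
  isTree_right : T'.IsTree
  deleteEdges_le_right : T.deleteEdges {s(v, u)} ≤ T'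
  deleteEdges_right_le : T'.deleteEdges {s(v, w)} ≤ T.deleteEdges {s(v, u)}

namespace IsEdgeSwap

variable {T T' : SimpleGraph V} {v u w a b : V}

theorem of_edgeSet_eq (hT : T.IsTree) (hT' : T'.IsTree)
    (hedges : T'.edgeSet = (T.edgeSet \ {s(v, u)}) ∪ {s(v, w)}) : IsEdgeSwap T T' v u w where
  isTree_left := hT
  isTree_right := hT'
  deleteEdges_le_right := by
    rw [← edgeSet_subset_edgeSet, edgeSet_deleteEdges, hedges]
    exact Set.subset_union_left
  deleteEdges_right_le := by
    rw [← edgeSet_subset_edgeSet, edgeSet_deleteEdges, edgeSet_deleteEdges, hedges,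
      Set.union_sdiff_right]
    exact Set.sdiff_subset

theorem dist_eq (h : IsEdgeSwap T T' v u w) (hab : (T.deleteEdges {s(v, u)}).Reachable a b) :
    T'.dist a b = T.dist a b :=
  (h.isTree_right.isAcyclic.dist_eq_of_le h.deleteEdges_le_right hab).trans
    (h.isTree_left.isAcyclic.dist_eq_of_le (SimpleGraph.deleteEdges_le _) hab).symm

theorem dist_eq_add (h : IsEdgeSwap T T' v u w)
    (hab : ¬ (T.deleteEdges {s(v, u)}).Reachable a b) : T.dist a b = T.dist a v + T.dist v b :=
  dist_eq_add_dist_of_not_reachable_deleteEdges (h.isTree_left.connected a b) hab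

theorem dist_eq_add' (h : IsEdgeSwap T T' v u w)
    (hab : ¬ (T.deleteEdges {s(v, u)}).Reachable a b) : T'.dist a b = T'.dist a v + T'.dist v b :=
  dist_eq_add_dist_of_not_reachable_deleteEdges (h.isTree_right.connected a b)
    fun hr => hab (hr.mono h.deleteEdges_right_le)

variable [Fintype V]

theorem exists_not_reachable_dist_eq_ecc (h : IsEdgeSwap T T' v u w) (himp : ecc T' v < ecc T v) :
    ∃ y, ¬ (T.deleteEdges {s(v, u)}).Reachable v y ∧ T.dist v y = ecc T v := by
  obtain ⟨y, hy⟩ := exists_dist_eq_ecc T v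
  refine ⟨y, fun hr => ?_, hy⟩
  have := dist_le_ecc T' v y
  rw [h.dist_eq hr] at this
  omega

theorem dist_add_ecc_le (h : IsEdgeSwap T T' v u w) (himp : ecc T' v < ecc T v)
    (ha : (T.deleteEdges {s(v, u)}).Reachable a v) : T.dist a v + ecc T v ≤ ecc T a := by
  obtain ⟨y, hy, hyd⟩ := h.exists_not_reachable_dist_eq_ecc himp
  calc T.dist a v + ecc T v = T.dist a y := by
        rw [h.dist_eq_add fun hr => hy (ha.symm.trans hr), hyd]
    _ ≤ ecc T a := dist_le_ecc T a y

theorem dist_lt_add_ecc (h : IsEdgeSwap T T' v u w) (himp : ecc T' v < ecc T v)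
    (ha : (T.deleteEdges {s(v, u)}).Reachable a v)
    (hab : ¬ (T.deleteEdges {s(v, u)}).Reachable a b) : T'.dist a b < T.dist a v + ecc T v := by
  have := dist_le_ecc T' v b
  rw [h.dist_eq_add' hab, h.dist_eq ha]
  omega

theorem ecc_le_of_reachable (h : IsEdgeSwap T T' v u w) (himp : ecc T' v < ecc T v)
    (ha : (T.deleteEdges {s(v, u)}).Reachable a v) : ecc T' a ≤ ecc T a := by
  obtain ⟨y, hy⟩ := exists_dist_eq_ecc T' a
  rw [← hy]
  by_cases hay : (T.deleteEdges {s(v, u)}).Reachable a y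
  · exact h.dist_eq hay ▸ dist_le_ecc T a y
  · exact (h.dist_lt_add_ecc himp ha hay).le.trans (h.dist_add_ecc_le himp ha)

variable {z : V}

theorem ecc_le_of_not_reachable (h : IsEdgeSwap T T' v u w) (himp : ecc T' v < ecc T v)
    (hz : ∀ y, (T.deleteEdges {s(v, u)}).Reachable y v → T.dist y v ≤ T.dist z v)
    (ha : ¬ (T.deleteEdges {s(v, u)}).Reachable a v) (hA : T.dist z v + ecc T v ≤ ecc T' a) :
    ecc T' a ≤ ecc T a := by
  obtain ⟨y, hy⟩ := exists_dist_eq_ecc T' a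
  rw [← hy] at hA ⊢
  by_cases hyv : (T.deleteEdges {s(v, u)}).Reachable y v
  · have hya := h.dist_lt_add_ecc himp hyv fun hr => ha (hr.symm.trans hyv)
    have := hz y hyv
    rw [dist_comm] at hya
    omega
  · exact h.dist_eq (h.isTree_left.connected.preconnected.reachable_deleteEdges_of_not_reachable ha hyv)
      ▸ dist_le_ecc T a y

theorem ecc_lt (h : IsEdgeSwap T T' v u w) (himp : ecc T' v < ecc T v)
    (hz : ∀ y, (T.deleteEdges {s(v, u)}).Reachable y v → T.dist y v ≤ T.dist z v)
    (hzv : (T.deleteEdges {s(v, u)}).Reachable z v) : ecc T' z < T.dist z v + ecc T v := by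
  obtain ⟨y, hy⟩ := exists_dist_eq_ecc T' z
  rw [← hy]
  by_cases hzy : (T.deleteEdges {s(v, u)}).Reachable z y
  · have hzv_lt : T.dist z v < ecc T v := by
      have := dist_le_ecc T' v z
      rw [dist_comm, h.dist_eq hzv] at this
      omega
    have hvy : T.dist v y ≤ T.dist z v := by
      rw [dist_comm]
      exact hz y (hzy.symm.trans hzv)
    have := h.isTree_left.connected.dist_triangle (u := z) (v := v) (w := y)
    rw [h.dist_eq hzy]
    omega
  · exact h.dist_lt_add_ecc himp hzv hzy

theorem sortedEcc_lex (h : IsEdgeSwap T T' v u w) (himp : ecc T' v < ecc T v) :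
    List.Lex (· < ·) (sortedEcc T') (sortedEcc T) := by
  classical
  obtain ⟨z, hzv, hz⟩ := Finset.exists_max_image
    (Finset.univ.filter fun x => (T.deleteEdges {s(v, u)}).Reachable x v) (T.dist · v)
    ⟨v, by simp⟩
  replace hzv : (T.deleteEdges {s(v, u)}).Reachable z v := by simpa using hzv
  replace hz : ∀ y, (T.deleteEdges {s(v, u)}).Reachable y v → T.dist y v ≤ T.dist z v :=
    fun y hy => hz y (by simpa using hy)
  refine Finset.lex_reverse_sort_map (ecc T) (ecc T') (T.dist z v + ecc T v) (fun a _ hA => ?_)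
    (Finset.mem_univ z) (h.dist_add_ecc_le himp hzv) (h.ecc_lt himp hz hzv)
  by_cases ha : (T.deleteEdges {s(v, u)}).Reachable a v
  · exact h.ecc_le_of_reachable himp ha
  · exact h.ecc_le_of_not_reachable himp hz ha hA

end IsEdgeSwap

theorem stmt9_general [Fintype V] (T T' : SimpleGraph V)
    (hT : T.IsTree) (hT't : T'.IsTree)
    (v u w : V)
    (hT'edges : T'.edgeSet = (T.edgeSet \ {s(v, u)}) ∪ {s(v, w)})
    (himp : ecc T' v < ecc T v) :
    List.Lex (· < ·) (sortedEcc T') (sortedEcc T) :=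
  (IsEdgeSwap.of_edgeSet_eq hT hT't hT'edges).sortedEcc_lex himp

/-- the descending sorted eccentricity vector is a generalized
ordinal potential for the Max Swap Game on trees: an improving swap makes it
strictly lexicographically smaller. -/
theorem stmt9 [Fintype V] [DecidableEq V] (T T' : SimpleGraph V)
    (hT : T.IsTree) (hT't : T'.IsTree)
    (v u w : V) (hvu : T.Adj v u)
    (hT'edges : T'.edgeSet = (T.edgeSet \ {s(v, u)}) ∪ {s(v, w)})
    (himp : ecc T' v < ecc T v) :
    List.Lex (· < ·) (sortedEcc T') (sortedEcc T) :=
  stmt9_general T T' hT hT't v u w hT'edges himp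

end NCG
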